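/- arXiv:0711.0915 — 5 statements merged into one kernel-verified Lean document; each statement's English description precedes it below -/
import Mathlib

section
/- (Proposition 5.1, word form.) Let 0 ≤ i ≤ n−3 and 0 ≤ j ≤ n−3, and let u, v be words over {0,…,n−2}. If u ++ c_i ++ reverse(u) ≈ v ++ c_j ++ reverse(v), then i = j. In other words, two G-homotopic primitive 6-cycles of the permutahedron graph are associated with the same pair of adjacent transpositions s_i, s_{i+1}. -/
/-- The adjacent transposition `s_j = (j, j+1)` in the symmetric group on `Fin n`,
indexed by `j : Fin (n-1)`. -/
def s {n : ℕ} (j : Fin (n - 1)) : Equiv.Perm (Fin n) :=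
  Equiv.swap ⟨j.val, by have := j.isLt; omega⟩ ⟨j.val + 1, by have := j.isLt; omega⟩

/-- `π` sends a word `[j₁, …, j_r]` over the alphabet `{0, …, n-2}` to the product
`s_{j₁} ⋯ s_{j_r}`. -/
def π {n : ℕ} (w : List (Fin (n - 1))) : Equiv.Perm (Fin n) :=
  (w.map s).prod

/-- The two elementary moves on words: (T2) insertion of a square `[j, j]`, and
(T3) commutation of two letters `j, k` with `|j - k| ≥ 2`. -/
inductive Move {n : ℕ} : List (Fin (n - 1)) → List (Fin (n - 1)) → Prop
  | t2 (u v : List (Fin (n - 1))) (j : Fin (n - 1)) :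
      Move (u ++ v) (u ++ [j, j] ++ v)
  | t3 (u v : List (Fin (n - 1))) (j k : Fin (n - 1))
      (h : j.val + 2 ≤ k.val ∨ k.val + 2 ≤ j.val) :
      Move (u ++ [j, k] ++ v) (u ++ [k, j] ++ v)

/-- The equivalence `≈` on words: the reflexive–symmetric–transitive closure of the
moves (T2) and (T3). -/
def WEquiv {n : ℕ} : List (Fin (n - 1)) → List (Fin (n - 1)) → Prop :=
  Relation.EqvGen Move

/-- The word `c_i = [i, i+1, i, i+1, i, i+1]` labelling a primitive 6-cycle of the
permutahedron graph, defined for `i + 3 ≤ n` (i.e. `0 ≤ i ≤ n-3`). -/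
def cword {n : ℕ} (i : ℕ) (hi : i + 3 ≤ n) : List (Fin (n - 1)) :=
  [⟨i, by omega⟩, ⟨i + 1, by omega⟩, ⟨i, by omega⟩,
   ⟨i + 1, by omega⟩, ⟨i, by omega⟩, ⟨i + 1, by omega⟩]


lemma count_parity_move {n : ℕ} {w w' : List (Fin (n - 1))} (h : Move w w')
    (a : Fin (n - 1)) : w.count a % 2 = w'.count a % 2 := by
  cases h with
  | t2 u v j =>
      simp only [List.count_append, List.count_cons, List.count_nil]
      split_ifs <;> omega
  | t3 u v j k h =>
      simp only [List.count_append, List.count_cons, List.count_nil]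
      split_ifs <;> omega

lemma count_parity_wequiv {n : ℕ} {w w' : List (Fin (n - 1))} (h : WEquiv w w')
    (a : Fin (n - 1)) : w.count a % 2 = w'.count a % 2 := by
  induction h with
  | rel _ _ hm => exact count_parity_move hm a
  | refl => rfl
  | symm _ _ _ ih => exact ih.symm
  | trans _ _ _ _ _ ih1 ih2 => exact ih1.trans ih2

/-- Proposition 5.1, word form: two G-homotopic primitive 6-cycles of the
permutahedron graph are associated with the same pair of adjacent transpositions. -/
theorem eq_of_wequiv_conj_cword {n : ℕ} (hn : 2 ≤ n) (i j : ℕ)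
    (hi : i + 3 ≤ n) (hj : j + 3 ≤ n) (u v : List (Fin (n - 1)))
    (h : WEquiv (u ++ cword i hi ++ u.reverse) (v ++ cword j hj ++ v.reverse)) :
    i = j := by
  have key := fun a => count_parity_wequiv h a
  have h1 := key ⟨i, by omega⟩
  have h2 := key ⟨i + 1, by omega⟩
  simp [List.count_append, List.count_reverse, cword, List.count_cons,
    Fin.mk.injEq, Fin.ext_iff] at h1 h2
  split_ifs at h1 h2 <;> omega
end

section
/- (Insertion of s_j² is not needed.) Define a one-step reduction relation ⟶ on words over {0,…,n−2}: w ⟶ w' iff either w = u ++ [j,j] ++ v and w' = u ++ v for some letter j (deletion of a square), or w = u ++ [j,k] ++ v and w' = u ++ [k,j] ++ v with |j−k| ≥ 2 (commutation). If a word W satisfies W ≈ [] (W is equivalent to the empty word, where insertions of squares are allowed), then W can be transformed into the empty word using only deletions of squares and commutations, i.e., the reflexive–transitive closure of ⟶ relates W to []. -/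
/-- One-step reduction on words: deletion of a square `[j, j]`, or commutation of two
letters `j, k` with `|j - k| ≥ 2`. -/
inductive Step {n : ℕ} : List (Fin (n - 1)) → List (Fin (n - 1)) → Prop
  | del (u v : List (Fin (n - 1))) (j : Fin (n - 1)) :
      Step (u ++ [j, j] ++ v) (u ++ v)
  | comm (u v : List (Fin (n - 1))) (j k : Fin (n - 1))
      (h : j.val + 2 ≤ k.val ∨ k.val + 2 ≤ j.val) :
      Step (u ++ [j, k] ++ v) (u ++ [k, j] ++ v)

/-! Reducibility to `[]` by deletions and commutations is clearly preserved by commutations and by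
inserting a square; the point is that it also survives removing one. Commutations may pull the two
copies of `j` apart, so the invariant concerns words `u ++ j :: c ++ j :: v` in which every letter
of `c` is distant from `j`: if such a word reduces to `[]`, so does `u ++ c ++ v`. Induct on the
reduction. A step away from the two marked letters is replayed; a commutation moving a letter across
a marked `j` just changes `c`; deleting the marked pair itself leaves `u ++ v` with `c = []`; and a
deletion of one marked `j` with a neighbouring `j` is replaced by commuting the other marked `j`
across `c`. -/

theorem List.append_cons_eq_append_cons_cons {α : Type*} {u r a b : List α} {j x y : α}
    (h : u ++ j :: r = a ++ x :: y :: b) :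
    (∃ u₂, u = a ++ x :: y :: u₂ ∧ b = u₂ ++ j :: r) ∨ (u = a ++ [x] ∧ y = j ∧ b = r) ∨
      (a = u ∧ x = j ∧ r = y :: b) ∨ (∃ r₁, r = r₁ ++ x :: y :: b ∧ a = u ++ j :: r₁) := by
  rcases List.append_eq_append_iff.mp h with ⟨_ | ⟨j', a'⟩, rfl, h⟩ | ⟨_ | ⟨x', _ | ⟨y', u'⟩⟩, rfl, h⟩
  all_goals simp_all

def Distant {m : ℕ} (j k : Fin m) : Prop :=
  j.val + 2 ≤ k.val ∨ k.val + 2 ≤ j.val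

theorem Distant.symm {m : ℕ} {j k : Fin m} (h : Distant j k) : Distant k j :=
  Or.symm h

theorem Distant.irrefl {m : ℕ} (j : Fin m) : ¬Distant j j := by
  unfold Distant; omega

section Reduction

variable {n : ℕ}

theorem Step.del_cons (a b : List (Fin (n - 1))) (x : Fin (n - 1)) :
    Step (a ++ x :: x :: b) (a ++ b) := by
  simpa using Step.del a b x

theorem Step.comm_cons (a b : List (Fin (n - 1))) {x y : Fin (n - 1)} (h : Distant x y) :
    Step (a ++ x :: y :: b) (a ++ y :: x :: b) := by
  simpa using Step.comm a b x y h

theorem reflTransGen_step_shift_right (u c v : List (Fin (n - 1))) {j : Fin (n - 1)}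
    (hc : ∀ m ∈ c, Distant j m) :
    Relation.ReflTransGen Step (u ++ j :: (c ++ v)) (u ++ (c ++ j :: v)) := by
  induction c generalizing u with
  | nil => rfl
  | cons m c ih =>
    refine .head (Step.comm_cons u (c ++ v) (hc m List.mem_cons_self)) ?_
    simpa using ih (u ++ [m]) fun x hx => hc x (List.mem_cons_of_mem _ hx)

theorem reflTransGen_step_shift_left (u c v : List (Fin (n - 1))) {j : Fin (n - 1)}
    (hc : ∀ m ∈ c, Distant j m) :
    Relation.ReflTransGen Step (u ++ (c ++ j :: v)) (u ++ j :: (c ++ v)) := by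
  induction c generalizing u with
  | nil => rfl
  | cons m c ih =>
    refine .tail ?_ (Step.comm_cons u (c ++ v) (hc m List.mem_cons_self).symm)
    simpa using ih (u ++ [m]) fun x hx => hc x (List.mem_cons_of_mem _ hx)

abbrev ReducesToNil (w : List (Fin (n - 1))) : Prop :=
  Relation.ReflTransGen Step w []

def PairErasable (w : List (Fin (n - 1))) : Prop :=
  ∀ u c v j, (∀ m ∈ c, Distant j m) → w = u ++ j :: (c ++ j :: v) → ReducesToNil (u ++ (c ++ v))

theorem PairErasable.of_step_del {a b : List (Fin (n - 1))} {x : Fin (n - 1)}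
    (hr : ReducesToNil (a ++ b)) (ih : PairErasable (a ++ b)) :
    PairErasable (a ++ x :: x :: b) := by
  intro u c v j hc h
  rcases List.append_cons_eq_append_cons_cons h.symm with
    ⟨u₂, rfl, rfl⟩ | ⟨rfl, rfl, rfl⟩ | ⟨rfl, rfl, hcv⟩ | ⟨r₁, hcv, rfl⟩
  · refine .head (by simpa using Step.del_cons a (u₂ ++ (c ++ v)) x) ?_
    simpa using ih (a ++ u₂) c v j hc (by simp)
  · simpa using (reflTransGen_step_shift_right a c v hc).trans hr
  · rcases c with _ | ⟨m, c⟩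
    · simp_all
    · obtain rfl : m = x := (List.cons.inj hcv).1
      exact absurd (hc m List.mem_cons_self) (Distant.irrefl m)
  rcases List.append_cons_eq_append_cons_cons hcv with
    ⟨c₂, rfl, rfl⟩ | ⟨rfl, rfl, rfl⟩ | ⟨rfl, rfl, rfl⟩ | ⟨v₁, rfl, rfl⟩
  · refine .head (by simpa using Step.del_cons (u ++ r₁) (c₂ ++ v) x) ?_
    simpa using ih u (r₁ ++ c₂) v j (fun m hm => hc m (by simp at hm ⊢; tauto)) (by simp)
  · exact absurd (hc x (by simp)) (Distant.irrefl x)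
  · exact (reflTransGen_step_shift_left u r₁ b hc).trans (by simpa using hr)
  · refine .head (by simpa using Step.del_cons (u ++ c ++ v₁) b x) ?_
    simpa using ih u c (v₁ ++ b) j hc (by simp)

theorem PairErasable.of_step_comm {a b : List (Fin (n - 1))} {x y : Fin (n - 1)}
    (hxy : Distant x y) (ih : PairErasable (a ++ y :: x :: b)) :
    PairErasable (a ++ x :: y :: b) := by
  intro u c v j hc h
  rcases List.append_cons_eq_append_cons_cons h.symm with
    ⟨u₂, rfl, rfl⟩ | ⟨rfl, rfl, rfl⟩ | ⟨rfl, rfl, hcv⟩ | ⟨r₁, hcv, rfl⟩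
  · refine .head (by simpa using Step.comm_cons a (u₂ ++ (c ++ v)) hxy) ?_
    simpa using ih (a ++ y :: x :: u₂) c v j hc (by simp)
  · have hxc : ∀ m ∈ x :: c, Distant y m := by
      simpa using ⟨hxy.symm, hc⟩
    simpa using ih a (x :: c) v y hxc (by simp)
  · rcases c with _ | ⟨m, c⟩
    · obtain rfl : y = x := (List.cons.inj hcv).1.symm
      exact absurd hxy (Distant.irrefl y)
    · obtain ⟨rfl, rfl⟩ := List.cons.inj hcv
      simpa using ih (a ++ [m]) c v x (fun k hk => hc k (List.mem_cons_of_mem _ hk)) (by simp)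
  rcases List.append_cons_eq_append_cons_cons hcv with
    ⟨c₂, rfl, rfl⟩ | ⟨rfl, rfl, rfl⟩ | ⟨rfl, rfl, rfl⟩ | ⟨v₁, rfl, rfl⟩
  · refine .head (by simpa using Step.comm_cons (u ++ r₁) (c₂ ++ v) hxy) ?_
    simpa using ih u (r₁ ++ y :: x :: c₂) v j (fun m hm => hc m (by simp at hm ⊢; tauto))
      (by simp)
  · simpa using ih u r₁ (x :: b) y (fun m hm => hc m (by simp [hm])) (by simp)
  · have hcy : ∀ m ∈ r₁ ++ [y], Distant x m := by
      simpa [or_imp, forall_and] using ⟨hc, hxy⟩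
    simpa using ih u (r₁ ++ [y]) b x hcy (by simp)
  · refine .head (by simpa using Step.comm_cons (u ++ c ++ v₁) b hxy) ?_
    simpa using ih u c (v₁ ++ y :: x :: b) j hc (by simp)

theorem PairErasable.of_reducesToNil {w : List (Fin (n - 1))} (hw : ReducesToNil w) :
    PairErasable w := by
  induction hw using Relation.ReflTransGen.head_induction_on with
  | refl => intro u c v j _ h; simp at h
  | head hstep hrest ih =>
    rcases hstep with ⟨a, b, x⟩ | ⟨a, b, x, y, hxy⟩
    · simpa using PairErasable.of_step_del (x := x) hrest ih
    · simpa using PairErasable.of_step_comm (a := a) (b := b) hxy (by simpa using ih)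

theorem ReducesToNil.erase_distant_pair {u c v : List (Fin (n - 1))} {j : Fin (n - 1)}
    (hw : ReducesToNil (u ++ j :: (c ++ j :: v))) (hc : ∀ m ∈ c, Distant j m) :
    ReducesToNil (u ++ (c ++ v)) :=
  PairErasable.of_reducesToNil hw u c v j hc rfl

theorem reducesToNil_iff_of_move {w w' : List (Fin (n - 1))} (h : Move w w') :
    ReducesToNil w ↔ ReducesToNil w' := by
  rcases h with ⟨u, v, j⟩ | ⟨u, v, j, k, hjk⟩
  · refine ⟨fun hw => .head (Step.del u v j) hw, fun hw => ?_⟩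
    simpa using ReducesToNil.erase_distant_pair (u := u) (c := []) (v := v) (j := j)
      (by simpa using hw) (by simp)
  · exact ⟨.head (Step.comm u v k j hjk.symm), .head (Step.comm u v j k hjk)⟩

end Reduction

theorem reduces_to_nil_of_wequiv_nil_general {n : ℕ}
    (W : List (Fin (n - 1))) (h : WEquiv W []) :
    Relation.ReflTransGen Step W [] := by
  have hiff : Equivalence fun w w' : List (Fin (n - 1)) => ReducesToNil w ↔ ReducesToNil w' :=
    ⟨fun _ => Iff.rfl, Iff.symm, Iff.trans⟩
  exact (hiff.eqvGen_iff.mp (h.mono fun _ _ => reducesToNil_iff_of_move)).mpr .refl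

/-- insertion of `s_j²` is not needed: if `W ≈ []`, then `W` can be reduced
to the empty word using only deletions of squares and commutations. -/
theorem reduces_to_nil_of_wequiv_nil {n : ℕ} (hn : 2 ≤ n)
    (W : List (Fin (n - 1))) (h : WEquiv W []) :
    Relation.ReflTransGen Step W [] :=
  reduces_to_nil_of_wequiv_nil_general W h
end

section
/- (Theorem 5.2, 'if' direction.) Let n ≥ 2, let 0 ≤ i ≤ n−3, and let σ, γ ∈ Equiv.Perm (Fin n). Let H_i be the subgroup of Equiv.Perm (Fin n) generated by the adjacent transpositions s_m that are disjoint from s_i and s_{i+1}, i.e., by {s_m : m ≤ i−2 or m ≥ i+3}. If σ⁻¹γ ∈ H_i, then there exist words u, v over {0,…,n−2} with π(u) = σ, π(v) = γ, and u ++ c_i ++ reverse(u) ≈ v ++ c_i ++ reverse(v); that is, the primitive 6-cycles based at σ and at γ with transpositions s_i, s_{i+1} are G-homotopic. -/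
section Words

variable {n : ℕ}

lemma π_append (a b : List (Fin (n - 1))) : π (a ++ b) = π a * π b := by
  simp [π]

lemma exists_word_of_mem_closure {P : Fin (n - 1) → Prop} {g : Equiv.Perm (Fin n)}
    (hg : g ∈ Subgroup.closure {g | ∃ m, P m ∧ g = s m}) :
    ∃ w : List (Fin (n - 1)), (∀ m ∈ w, P m) ∧ π w = g := by
  induction hg using Subgroup.closure_induction'' with
  | mem _ hx =>
    obtain ⟨m, hm, rfl⟩ := hx
    exact ⟨[m], by simpa using hm, by simp [π]⟩
  | inv_mem _ hx =>
    obtain ⟨m, hm, rfl⟩ := hx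
    exact ⟨[m], by simpa using hm, by simp [π, s]⟩
  | one => exact ⟨[], by simp, rfl⟩
  | mul _ _ _ _ hx hy =>
    obtain ⟨w₁, hw₁, rfl⟩ := hx
    obtain ⟨w₂, hw₂, rfl⟩ := hy
    exact ⟨w₁ ++ w₂, fun m hm => (List.mem_append.mp hm).elim (hw₁ m) (hw₂ m), π_append w₁ w₂⟩

lemma π_surjective : Function.Surjective (π (n := n)) := by
  intro σ
  cases n with
  | zero => exact ⟨[], Subsingleton.elim _ _⟩
  | succ n =>
    have htop := Subgroup.closure_eq_top_of_mclosure_eq_top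
      (Equiv.Perm.mclosure_swap_castSucc_succ n)
    have hσ : σ ∈ Subgroup.closure {g | ∃ m : Fin (n + 1 - 1), True ∧ g = s m} := by
      refine Subgroup.closure_mono ?_ (htop ▸ Subgroup.mem_top σ)
      rintro _ ⟨m, rfl⟩
      -- `n + 1 - 1` reduces to `n`, and then `s m` is `swap m.castSucc m.succ` by definition
      exact ⟨m, trivial, rfl⟩
    obtain ⟨w, -, hw⟩ := exists_word_of_mem_closure hσ
    exact ⟨w, hw⟩

end Words

section Equivalence

variable {n : ℕ} {a b : List (Fin (n - 1))}

lemma WEquiv.refl (a : List (Fin (n - 1))) : WEquiv a a := Relation.EqvGen.refl a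

lemma WEquiv.symm (h : WEquiv a b) : WEquiv b a := Relation.EqvGen.symm _ _ h

lemma WEquiv.trans {c : List (Fin (n - 1))} (h₁ : WEquiv a b) (h₂ : WEquiv b c) :
    WEquiv a c :=
  Relation.EqvGen.trans _ _ _ h₁ h₂

lemma Move.wequiv (h : Move a b) : WEquiv a b := Relation.EqvGen.rel _ _ h

lemma Move.append_append (x y : List (Fin (n - 1))) (h : Move a b) :
    Move (x ++ a ++ y) (x ++ b ++ y) := by
  cases h with
  | t2 u v j => simpa using Move.t2 (x ++ u) (v ++ y) j
  | t3 u v j k hjk => simpa using Move.t3 (x ++ u) (v ++ y) j k hjk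

lemma WEquiv.append_append (x y : List (Fin (n - 1))) (h : WEquiv a b) :
    WEquiv (x ++ a ++ y) (x ++ b ++ y) := by
  induction h with
  | rel _ _ h => exact (h.append_append x y).wequiv
  | refl => exact .refl _
  | symm _ _ _ ih => exact ih.symm
  | trans _ _ _ _ _ ih₁ ih₂ => exact ih₁.trans ih₂

lemma cons_wequiv_append_singleton (m : Fin (n - 1)) (l : List (Fin (n - 1)))
    (hl : ∀ k ∈ l, k.val + 2 ≤ m.val ∨ m.val + 2 ≤ k.val) :
    WEquiv (m :: l) (l ++ [m]) := by
  induction l with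
  | nil => exact .refl _
  | cons k l ih =>
    have swap_mk : Move (m :: k :: l) (k :: m :: l) := by
      simpa using Move.t3 [] l m k (hl k List.mem_cons_self).symm
    have push_m := (ih fun x hx => hl x (List.mem_cons_of_mem _ hx)).append_append [k] []
    simp only [List.singleton_append, List.append_nil] at push_m
    exact swap_mk.wequiv.trans push_m

lemma wequiv_singleton_append_append_singleton (m : Fin (n - 1)) (c : List (Fin (n - 1)))
    (hc : ∀ k ∈ c, k.val + 2 ≤ m.val ∨ m.val + 2 ≤ k.val) :
    WEquiv c ([m] ++ c ++ [m]) := by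
  have insert_mm := (Move.t2 c [] m).wequiv
  have move_m := (cons_wequiv_append_singleton m c hc).append_append [] [m]
  simp only [List.append_nil, List.nil_append, List.append_assoc, List.cons_append]
    at insert_mm move_m ⊢
  exact insert_mm.trans move_m.symm

lemma wequiv_append_append_reverse (c w : List (Fin (n - 1)))
    (hw : ∀ m ∈ w, ∀ k ∈ c, k.val + 2 ≤ m.val ∨ m.val + 2 ≤ k.val) :
    WEquiv c (w ++ c ++ w.reverse) := by
  induction w with
  | nil => simpa using WEquiv.refl c
  | cons m w ih =>
    have conj_m := wequiv_singleton_append_append_singleton m c (hw m List.mem_cons_self)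
    have conj_w := (ih fun x hx => hw x (List.mem_cons_of_mem _ hx)).append_append [m] [m]
    simpa using conj_m.trans conj_w

end Equivalence

lemma val_of_mem_cword {n i : ℕ} {hi : i + 3 ≤ n} {k : Fin (n - 1)} (hk : k ∈ cword i hi) :
    k.val = i ∨ k.val = i + 1 := by
  simp only [cword, List.mem_cons, List.not_mem_nil, or_false] at hk
  rcases hk with rfl | rfl | rfl | rfl | rfl | rfl <;> simp

theorem wequiv_of_mem_disjoint_closure_general {n : ℕ} (i : ℕ) (hi : i + 3 ≤ n)
    (σ γ : Equiv.Perm (Fin n))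
    (h : σ⁻¹ * γ ∈ Subgroup.closure {g : Equiv.Perm (Fin n) |
      ∃ m : Fin (n - 1), (m.val + 2 ≤ i ∨ i + 3 ≤ m.val) ∧ g = s m}) :
    ∃ u v : List (Fin (n - 1)), π u = σ ∧ π v = γ ∧
      WEquiv (u ++ cword i hi ++ u.reverse) (v ++ cword i hi ++ v.reverse) := by
  obtain ⟨u, rfl⟩ := π_surjective σ
  obtain ⟨w, hw_far, hw⟩ := exists_word_of_mem_closure h
  refine ⟨u, u ++ w, rfl, by rw [π_append, hw, mul_inv_cancel_left], ?_⟩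
  have hcomm : ∀ m ∈ w, ∀ k ∈ cword i hi, k.val + 2 ≤ m.val ∨ m.val + 2 ≤ k.val := by
    intro m hm k hk
    have := hw_far m hm
    rcases val_of_mem_cword hk with hk | hk <;> omega
  simpa using (wequiv_append_append_reverse _ w hcomm).append_append u u.reverse

/-- Theorem 5.2, 'if' direction: if `σ⁻¹γ` lies in the subgroup generated
by the adjacent transpositions disjoint from `s_i` and `s_{i+1}` (those `s_m` with
`m ≤ i-2` or `m ≥ i+3`), then the primitive 6-cycles based at `σ` and at `γ` with
transpositions `s_i, s_{i+1}` are G-homotopic. -/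
theorem wequiv_of_mem_disjoint_closure {n : ℕ} (hn : 2 ≤ n) (i : ℕ) (hi : i + 3 ≤ n)
    (σ γ : Equiv.Perm (Fin n))
    (h : σ⁻¹ * γ ∈ Subgroup.closure {g : Equiv.Perm (Fin n) |
      ∃ m : Fin (n - 1), (m.val + 2 ≤ i ∨ i + 3 ≤ m.val) ∧ g = s m}) :
    ∃ u v : List (Fin (n - 1)), π u = σ ∧ π v = γ ∧
      WEquiv (u ++ cword i hi ++ u.reverse) (v ++ cword i hi ++ v.reverse) :=
  wequiv_of_mem_disjoint_closure_general i hi σ γ h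
end

section
/- (Corollary 5.4: vertical 6-cycles at different levels are in different equivalence classes.) Let n ≥ 2, let 0 ≤ i ≤ n−3 and 0 ≤ j ≤ n−3, and let σ, γ ∈ Equiv.Perm (Fin n) with σ⁻¹(n−1) ∈ {i, i+1, i+2} and γ⁻¹(n−1) ∈ {j, j+1, j+2} (so the 6-cycle at σ with transpositions s_i, s_{i+1} and the 6-cycle at γ with transpositions s_j, s_{j+1} are both vertical). If there exist words u, v over {0,…,n−2} with π(u) = σ, π(v) = γ, and u ++ c_i ++ reverse(u) ≈ v ++ c_j ++ reverse(v), then i = j; in particular the two vertical 6-cycles lie at the same level. -/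
lemma move_count_parity {n : ℕ} {w w' : List (Fin (n-1))} (h : Move w w') (ℓ : Fin (n-1)) :
    w.count ℓ % 2 = w'.count ℓ % 2 := by
  cases h with
  | t2 u v j =>
    simp only [List.count_append, List.count_cons, List.count_nil]
    split_ifs <;> omega
  | t3 u v j k _ =>
    simp only [List.count_append, List.count_cons, List.count_nil]
    split_ifs <;> omega

lemma wequiv_count_parity {n : ℕ} {w w' : List (Fin (n-1))} (h : WEquiv w w')
    (ℓ : Fin (n-1)) : w.count ℓ % 2 = w'.count ℓ % 2 := by
  induction h with
  | rel _ _ hm => exact move_count_parity hm ℓ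
  | refl => rfl
  | symm _ _ _ ih => exact ih.symm
  | trans _ _ _ _ _ ih1 ih2 => exact ih1.trans ih2

lemma sandwich_count_parity {n : ℕ} (u c : List (Fin (n-1))) (ℓ : Fin (n-1)) :
    (u ++ c ++ u.reverse).count ℓ % 2 = c.count ℓ % 2 := by
  simp only [List.count_append, List.count_reverse]
  omega

lemma cword_count {n : ℕ} (i : ℕ) (hi : i + 3 ≤ n) (ℓ : Fin (n-1)) :
    (cword i hi).count ℓ = if ℓ.val = i ∨ ℓ.val = i + 1 then 3 else 0 := by
  have h1 : (⟨i, by omega⟩ : Fin (n-1)) = ℓ ↔ ℓ.val = i := by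
    constructor
    · intro h; exact (Fin.mk_eq_mk.mp h.symm)
    · intro h; exact Fin.ext h.symm
  have h2 : (⟨i+1, by omega⟩ : Fin (n-1)) = ℓ ↔ ℓ.val = i + 1 := by
    constructor
    · intro h; exact (Fin.mk_eq_mk.mp h.symm)
    · intro h; exact Fin.ext h.symm
  simp only [cword, List.count_cons, List.count_nil]
  by_cases ha : ℓ.val = i <;> by_cases hb : ℓ.val = i+1 <;>
    simp_all <;> omega

/-- Corollary 5.4: two G-homotopic vertical primitive 6-cycles lie at the
same level: if the vertical 6-cycle at `σ` with transpositions `s_i, s_{i+1}` and the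
vertical 6-cycle at `γ` with transpositions `s_j, s_{j+1}` are G-homotopic, then `i = j`. -/
theorem level_eq_of_wequiv_vertical {n : ℕ} (hn : 2 ≤ n) (i j : ℕ)
    (hi : i + 3 ≤ n) (hj : j + 3 ≤ n) (σ γ : Equiv.Perm (Fin n))
    (hσ : (σ⁻¹ ⟨n - 1, by omega⟩ : Fin n).val ∈ ({i, i + 1, i + 2} : Set ℕ))
    (hγ : (γ⁻¹ ⟨n - 1, by omega⟩ : Fin n).val ∈ ({j, j + 1, j + 2} : Set ℕ))
    (h : ∃ u v : List (Fin (n - 1)), π u = σ ∧ π v = γ ∧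
      WEquiv (u ++ cword i hi ++ u.reverse) (v ++ cword j hj ++ v.reverse)) :
    i = j := by
  obtain ⟨u, v, -, -, hw⟩ := h
  have key : ∀ ℓ : Fin (n-1), (cword i hi).count ℓ % 2 = (cword j hj).count ℓ % 2 := by
    intro ℓ
    have := wequiv_count_parity hw ℓ
    rwa [sandwich_count_parity, sandwich_count_parity] at this
  have k1 := key ⟨i, by omega⟩
  have k2 := key ⟨i+1, by omega⟩
  simp only [cword_count, Fin.val_mk, true_or, or_true, if_true] at k1 k2
  split_ifs at k1 k2 <;> omega
end

section
/- (Identification of Γ(B_n) with the permutahedron graph via maximal chains.) For n ≥ 1 there exists a bijection e from Equiv.Perm (Fin n) to the set of maximal chains (flags) of the Boolean lattice Finset (Fin n), such that for all σ, τ ∈ Equiv.Perm (Fin n): τ = σ·s_m for some 0 ≤ m ≤ n−2 with τ ≠ σ (where s_m = Equiv.swap m (m+1)) if and only if the flags e(σ) and e(τ) differ in precisely one element, i.e., e(σ) ≠ e(τ) and there is exactly one member of e(σ) not belonging to e(τ). -/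
open Finset Function

theorem Equiv.Perm.eq_swap_of_ne_one {β : Type*} [DecidableEq β] {g : Perm β} {a b : β}
    (hg : g ≠ 1) (h : ∀ x, x ≠ a → x ≠ b → g x = x) : g = swap a b := by
  have hmoved : ∀ x, g x ≠ x → x = a ∨ x = b := fun x hx => by
    by_contra! hab
    exact hx (h x hab.1 hab.2)
  obtain ⟨x, hx⟩ : ∃ x, g x ≠ x := by
    by_contra! hfix
    exact hg (Equiv.ext hfix)
  -- `x`, `g x` and `g (g x)` are all moved, hence lie in `{a, b}`; this forces `g a = b`.
  have hgx : g (g x) ≠ g x := fun h' => hx (g.injective h')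
  have hggx : g (g (g x)) ≠ g (g x) := fun h' => hgx (g.injective h')
  have hab : g a = b ∧ g b = a := by grind
  ext y
  grind

theorem val_s_apply_lt_iff {n : ℕ} (m : Fin (n - 1)) (i : Fin n) {k : ℕ} (hk : k ≠ m + 1) :
    (s m i : ℕ) < k ↔ (i : ℕ) < k := by
  unfold s
  rw [Equiv.swap_apply_def]
  split_ifs <;> simp only [Fin.ext_iff] at * <;> omega

section Flag

variable {α : Type*}

theorem Flag.subset_of_card_le {F : Flag (Finset α)} {A B : Finset α} (hA : A ∈ F)
    (hB : B ∈ F) (h : #A ≤ #B) : A ⊆ B :=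
  (F.le_or_le hA hB).elim id fun hBA => (eq_of_subset_of_card_le hBA h).superset

theorem Flag.exists_mem_card_eq [Fintype α] (F : Flag (Finset α)) :
    ∀ {k}, k ≤ Fintype.card α → ∃ A ∈ F, #A = k
  | 0, _ => ⟨∅, F.bot_mem, card_empty⟩
  | k + 1, hk => by
    obtain ⟨A, hA, rfl⟩ := F.exists_mem_card_eq (Nat.le_of_succ_le hk)
    have hAmax : ¬ IsMax (⟨A, hA⟩ : F) := by
      rw [← Flag.isMax_coe, isMax_iff_eq_top, top_eq_univ, ← card_eq_iff_eq_univ]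
      exact (Nat.lt_of_succ_le hk).ne
    obtain ⟨⟨B, hB⟩, hAB⟩ := exists_covBy_of_wellFoundedLT hAmax
    exact ⟨B, hB, (Nat.covBy_iff_add_one_eq.1 (Flag.coe_covBy_coe.2 hAB).card_finset).symm⟩

end Flag

namespace Equiv

variable {α : Type*} [Fintype α] {n : ℕ} (σ τ : Fin n ≃ α) {j k : ℕ}

def initSeg (k : ℕ) : Finset α := {a | (σ.symm a : ℕ) < k}

@[simp] theorem mem_initSeg {a : α} : a ∈ σ.initSeg k ↔ (σ.symm a : ℕ) < k := by
  simp [initSeg]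

theorem initSeg_zero : σ.initSeg 0 = ∅ := by
  ext; simp

theorem initSeg_of_le (hk : n ≤ k) : σ.initSeg k = univ := by
  ext a
  simpa using (σ.symm a).isLt.trans_le hk

theorem initSeg_succ [DecidableEq α] (hk : k < n) :
    σ.initSeg (k + 1) = insert (σ ⟨k, hk⟩) (σ.initSeg k) := by
  ext a
  simp only [mem_initSeg, mem_insert, ← symm_apply_eq, Fin.ext_iff]
  omega

theorem apply_notMem_initSeg (i : Fin n) : σ i ∉ σ.initSeg i := by
  simp

theorem initSeg_min : σ.initSeg (min k n) = σ.initSeg k := by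
  rcases le_total k n with h | h
  · rw [min_eq_left h]
  · rw [min_eq_right h, initSeg_of_le σ le_rfl, initSeg_of_le σ h]

theorem card_initSeg_of_le (hk : k ≤ n) : #(σ.initSeg k) = k := by
  classical
  induction k with
  | zero => simp [initSeg_zero]
  | succ k ih =>
    rw [σ.initSeg_succ hk, card_insert_of_notMem (σ.apply_notMem_initSeg _), ih (by omega)]

theorem card_initSeg : #(σ.initSeg k) = min k n := by
  rw [← initSeg_min, card_initSeg_of_le σ (min_le_right k n)]

theorem initSeg_eq_initSeg_iff : σ.initSeg j = σ.initSeg k ↔ min j n = min k n := by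
  refine ⟨fun h => by rw [← σ.card_initSeg, h, σ.card_initSeg], fun h => ?_⟩
  rw [← initSeg_min, h, initSeg_min]

theorem apply_eq_of_initSeg_eq (i : Fin n) (h₀ : σ.initSeg i = τ.initSeg i)
    (h₁ : σ.initSeg (i + 1) = τ.initSeg (i + 1)) : σ i = τ i := by
  have hlt : (τ.symm (σ i) : ℕ) < i + 1 := (τ.mem_initSeg).1 (h₁ ▸ by simp)
  have hge : ¬ (τ.symm (σ i) : ℕ) < i := fun h =>
    σ.apply_notMem_initSeg i (h₀ ▸ (τ.mem_initSeg).2 h)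
  rw [← τ.symm_apply_eq, Fin.ext_iff]
  omega

theorem eq_of_initSeg_eq (h : ∀ k, σ.initSeg k = τ.initSeg k) : σ = τ :=
  Equiv.ext fun i => apply_eq_of_initSeg_eq σ τ i (h i) (h (i + 1))

theorem lt_of_initSeg_ne (h : σ.initSeg k ≠ τ.initSeg k) : k < n := by
  by_contra! hk
  exact h (by rw [σ.initSeg_of_le hk, τ.initSeg_of_le hk])

def toFlag : Flag (Finset α) :=
  Flag.rangeFin (fun k : Fin (n + 1) => σ.initSeg k) σ.initSeg_zero (σ.initSeg_of_le le_rfl)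
    fun k => by
      classical
      simp [σ.initSeg_succ k.isLt]

theorem mem_toFlag {A : Finset α} : A ∈ σ.toFlag ↔ ∃ k, σ.initSeg k = A := by
  refine ⟨fun ⟨k, hk⟩ => ⟨k, hk⟩, fun ⟨k, hk⟩ => ⟨⟨min k n, by omega⟩, ?_⟩⟩
  simpa [initSeg_min] using hk

theorem initSeg_mem_toFlag_iff : σ.initSeg k ∈ τ.toFlag ↔ σ.initSeg k = τ.initSeg k := by
  refine ⟨fun h => ?_, fun h => τ.mem_toFlag.2 ⟨k, h.symm⟩⟩
  obtain ⟨j, hj⟩ := τ.mem_toFlag.1 h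
  have hmin : min j n = min k n := by rw [← τ.card_initSeg, hj, σ.card_initSeg]
  rw [← hj, τ.initSeg_eq_initSeg_iff, hmin]

theorem toFlag_injective : Injective (toFlag : (Fin n ≃ α) → Flag (Finset α)) :=
  fun σ τ h =>
    eq_of_initSeg_eq σ τ fun k => (initSeg_mem_toFlag_iff σ τ).1 (h ▸ σ.mem_toFlag.2 ⟨k, rfl⟩)

theorem toFlag_surjective [DecidableEq α] (hcard : Fintype.card α = n) :
    Surjective (toFlag : (Fin n ≃ α) → Flag (Finset α)) := by
  intro F
  choose! A hAF hAcard using fun k (hk : k ≤ n) => F.exists_mem_card_eq (hcard ▸ hk)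
  have hmono : ∀ {j k}, j ≤ k → k ≤ n → A j ⊆ A k := fun hjk hk =>
    Flag.subset_of_card_le (hAF _ (hjk.trans hk)) (hAF _ hk)
      (by rwa [hAcard _ hk, hAcard _ (hjk.trans hk)])
  have hstep : ∀ i : Fin n, ∃ a ∉ A i, insert a (A i) = A (i + 1) := fun i =>
    exists_eq_insert_iff.2
      ⟨hmono (Nat.le_succ _) i.isLt, by rw [hAcard _ i.isLt, hAcard _ i.isLt.le]⟩
  choose f hfA hf using hstep
  have hlt : ∀ i j, i < j → f i ≠ f j := fun i j hij hfij =>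
    hfA j (hfij ▸ hmono hij j.isLt.le (hf i ▸ mem_insert_self _ _))
  have hinj : Injective f := fun i j hfij => by
    by_contra hne
    rcases Ne.lt_or_gt hne with h | h
    exacts [hlt i j h hfij, hlt j i h hfij.symm]
  let σ := Equiv.ofBijective f
    ((Fintype.bijective_iff_injective_and_card f).2 ⟨hinj, by simp [hcard]⟩)
  have hseg : ∀ k ≤ n, σ.initSeg k = A k := by
    intro k hk
    induction k with
    | zero => rw [initSeg_zero, eq_comm, ← card_eq_zero, hAcard 0 hk]
    | succ k ih => rw [σ.initSeg_succ hk, ih (by omega), ← hf ⟨k, hk⟩]; rfl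
  have hsub : (σ.toFlag : Set (Finset α)) ⊆ F := fun B hB => by
    obtain ⟨k, rfl⟩ := σ.mem_toFlag.1 hB
    rw [← initSeg_min, hseg _ (min_le_right _ _)]
    exact hAF _ (min_le_right _ _)
  exact ⟨σ, SetLike.coe_injective (σ.toFlag.maxChain.2 F.chain_le hsub)⟩

theorem mem_toFlag_and_notMem_iff {A : Finset α} :
    A ∈ σ.toFlag ∧ A ∉ τ.toFlag ↔ ∃ k, σ.initSeg k ≠ τ.initSeg k ∧ σ.initSeg k = A := by
  constructor
  · rintro ⟨hA, hAτ⟩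
    obtain ⟨k, rfl⟩ := σ.mem_toFlag.1 hA
    exact ⟨k, fun h => hAτ ((initSeg_mem_toFlag_iff σ τ).2 h), rfl⟩
  · rintro ⟨k, hk, rfl⟩
    exact ⟨σ.mem_toFlag.2 ⟨k, rfl⟩, fun h => hk ((initSeg_mem_toFlag_iff σ τ).1 h)⟩

theorem existsUnique_mem_toFlag_notMem_iff :
    (∃! A, A ∈ σ.toFlag ∧ A ∉ τ.toFlag) ↔ ∃! k, σ.initSeg k ≠ τ.initSeg k := by
  have hinj : ∀ {j k}, σ.initSeg j ≠ τ.initSeg j → σ.initSeg k ≠ τ.initSeg k →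
      σ.initSeg j = σ.initSeg k → j = k := fun hj hk h => by
    rwa [initSeg_eq_initSeg_iff, min_eq_left (lt_of_initSeg_ne σ τ hj).le,
      min_eq_left (lt_of_initSeg_ne σ τ hk).le] at h
  simp only [mem_toFlag_and_notMem_iff]
  constructor
  · rintro ⟨A, ⟨k, hk, rfl⟩, huniq⟩
    exact ⟨k, hk, fun j hj => hinj hj hk (huniq _ ⟨j, hj, rfl⟩)⟩
  · rintro ⟨k, hk, huniq⟩
    refine ⟨σ.initSeg k, ⟨k, hk, rfl⟩, ?_⟩
    rintro _ ⟨j, hj, rfl⟩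
    rw [huniq j hj]

theorem initSeg_s_trans (m : Fin (n - 1)) (hk : k ≠ (m : ℕ) + 1) :
    ((s m).trans σ).initSeg k = σ.initSeg k := by
  ext a
  rw [mem_initSeg, mem_initSeg, symm_trans_apply, show (s m).symm = s m from symm_swap _ _]
  exact val_s_apply_lt_iff m _ hk

theorem eq_s_trans_of_initSeg_eq (m : Fin (n - 1)) (hne : σ ≠ τ)
    (h : ∀ k, k ≠ (m : ℕ) + 1 → σ.initSeg k = τ.initSeg k) : τ = (s m).trans σ := by
  have hfix : ∀ i : Fin n, i ≠ ⟨m, by omega⟩ → i ≠ ⟨m + 1, by omega⟩ →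
      τ.trans σ.symm i = i := by
    intro i hi₀ hi₁
    simp only [ne_eq, Fin.ext_iff] at hi₀ hi₁
    rw [trans_apply, symm_apply_eq,
      apply_eq_of_initSeg_eq σ τ i (h i (by omega)) (h (i + 1) (by omega))]
  have hne' : τ.trans σ.symm ≠ 1 := fun h1 =>
    hne (Equiv.ext fun i => (σ.symm_apply_eq.1 (DFunLike.congr_fun h1 i)).symm)
  have hg : τ.trans σ.symm = s m := Perm.eq_swap_of_ne_one hne' hfix
  rw [← hg]
  ext i
  simp

theorem ne_and_exists_s_trans_iff :
    (σ ≠ τ ∧ ∃ m : Fin (n - 1), τ = (s m).trans σ) ↔ ∃! k, σ.initSeg k ≠ τ.initSeg k := by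
  constructor
  · rintro ⟨hne, m, rfl⟩
    refine ⟨m + 1, fun h => hne (eq_of_initSeg_eq _ _ fun k => ?_), fun k hk => ?_⟩
    · rcases eq_or_ne k (m + 1) with rfl | hk
      exacts [h, (initSeg_s_trans σ m hk).symm]
    · by_contra hk'
      exact hk (initSeg_s_trans σ m hk').symm
  · rintro ⟨k, hk, huniq⟩
    have hne : σ ≠ τ := by rintro rfl; exact hk rfl
    have hk0 : k ≠ 0 := by rintro rfl; exact hk (by rw [initSeg_zero, initSeg_zero])
    obtain ⟨m, rfl⟩ := Nat.exists_eq_add_one_of_ne_zero hk0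
    have hm : m < n - 1 := by have := lt_of_initSeg_ne σ τ hk; omega
    exact ⟨hne, ⟨m, hm⟩, eq_s_trans_of_initSeg_eq σ τ ⟨m, hm⟩ hne fun j hj =>
      by_contra fun h => hj (huniq j h)⟩

end Equiv

theorem exists_flag_equiv_general (n : ℕ) :
    ∃ e : Equiv.Perm (Fin n) ≃ Flag (Finset (Fin n)),
      ∀ σ τ : Equiv.Perm (Fin n),
        (σ ≠ τ ∧ ∃ m : Fin (n - 1), τ = σ * s m) ↔
          (e σ ≠ e τ ∧ ∃! A : Finset (Fin n), A ∈ e σ ∧ A ∉ e τ) := by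
  have hbij : Bijective (Equiv.toFlag : Equiv.Perm (Fin n) → Flag (Finset (Fin n))) :=
    ⟨Equiv.toFlag_injective, Equiv.toFlag_surjective (Fintype.card_fin n)⟩
  refine ⟨.ofBijective _ hbij, fun σ τ => ?_⟩
  have hne : (∃! A, A ∈ σ.toFlag ∧ A ∉ τ.toFlag) → σ.toFlag ≠ τ.toFlag :=
    fun ⟨A, ⟨hA, hAτ⟩, _⟩ h => hAτ (h ▸ hA)
  rw [Equiv.ofBijective_apply, Equiv.ofBijective_apply, and_iff_right_of_imp hne,
    Equiv.existsUnique_mem_toFlag_notMem_iff]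
  exact Equiv.ne_and_exists_s_trans_iff σ τ

/-- identification of `Γ(B_n)` with the graph of maximal chains of the
Boolean lattice: there is a bijection `e` from permutations to flags (maximal chains)
of `Finset (Fin n)` such that `σ` and `τ` are adjacent in the permutahedron graph iff
the flags `e σ` and `e τ` differ in precisely one element. -/
theorem exists_flag_equiv (n : ℕ) (hn : 1 ≤ n) :
    ∃ e : Equiv.Perm (Fin n) ≃ Flag (Finset (Fin n)),
      ∀ σ τ : Equiv.Perm (Fin n),
        (σ ≠ τ ∧ ∃ m : Fin (n - 1), τ = σ * s m) ↔
          (e σ ≠ e τ ∧ ∃! A : Finset (Fin n), A ∈ e σ ∧ A ∉ e τ) :=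
  exists_flag_equiv_general n
end
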